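/- (Theorem 3.6, generalized Δ-implicit contraction.) Let L be a nonempty set with a partial order ≼ and a multiplicative G_M-metric G such that (L, G) is multiplicative G_M-complete. Let F : L → L, x₀ ∈ L, η ∈ [0, 1/2), γ > 0, m a positive integer, and set μ = η/(1−η), so μ ∈ [0,1). Assume: (i) F x ≼ x for every x ∈ L; (ii) for all x, y, z in the closed ball B̄(x₀, γ): G(Fx, Fy, Fz)^{1/m} ≤ M^η, where M = max{ G(x,y,z)^{1/m}, G(x,Fx,Fx)^{1/m}, G(y,Fy,Fy)^{1/m}, G(x,Fy,Fy)^{1/m}, (min{G(z,Fx,Fx), G(x,z,z)})^{1/m} }; (iii) G(x₀, Fx₀, Fx₀) ≤ γ^{1−μ}; (iv) whenever a nonincreasing sequence (x_n) in B̄(x₀, γ) multiplicative G_M-converges to a point v, then v ≼ x_n for every n. Then there exists x* ∈ B̄(x₀, γ) with F x* = x* and G(x*, x*, x*) = 1; moreover any two comparable fixed points of F in B̄(x₀, γ) are equal. -/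

import Mathlib

structure IsMultGMetric {Z : Type*} (G : Z → Z → Z → ℝ) : Prop where
  pos : ∀ x y z, 0 < G x y z
  eq_one : ∀ x y z, x = y → y = z → G x y z = 1
  one_lt : ∀ x y, x ≠ y → 1 < G x x y
  le_of_ne : ∀ x y z, y ≠ z → G x x y ≤ G x y z
  perm : ∀ x y z, G x y z = G y z x
  swap : ∀ x y z, G x y z = G x z y
  rect : ∀ x y z t, G x y z ≤ G x t t * G t y z

def GMConv {Z : Type*} (G : Z → Z → Z → ℝ) (x : ℕ → Z) (p : Z) : Prop :=
  ∀ ε : ℝ, 1 < ε → ∃ N : ℕ, ∀ n ≥ N, ∀ m ≥ N, G (x n) (x m) p < ε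

def GMCauchy {Z : Type*} (G : Z → Z → Z → ℝ) (x : ℕ → Z) : Prop :=
  ∀ ε : ℝ, 1 < ε → ∃ N : ℕ, ∀ n ≥ N, ∀ m ≥ N, ∀ l ≥ N, G (x n) (x m) (x l) < ε

def GMComplete {Z : Type*} (G : Z → Z → Z → ℝ) : Prop :=
  ∀ x : ℕ → Z, GMCauchy G x → ∃ p : Z, GMConv G x p

def GMBall {Z : Type*} (G : Z → Z → Z → ℝ) (x₀ : Z) (γ : ℝ) : Set Z :=
  {ρ | G x₀ ρ ρ ≤ γ}

/-!
Taking logarithms turns `G` into an additive G-metric `logG G`, and condition (ii) into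
`logG G (F x) (F y) (F z) ≤ η * max (...)`. Along the Picard orbit `xₙ = F^[n] x₀`, with
`dₙ = logG G xₙ xₙ₊₁ xₙ₊₁`, every term of that maximum is at most `dₙ + dₙ₊₁`, so
`dₙ₊₁ ≤ μ dₙ` with `μ = η / (1 - η) < 1`. The rectangle inequality then gives
`logG G x₀ xₙ xₙ ≤ d₀ / (1 - μ) ≤ log γ` by (iii): the orbit stays in the ball, is Cauchy,
and its limit `p` is fixed because `logG G p (F p) (F p) ≤ η * logG G p (F p) (F p)` in the
limit. Two fixed points `u, v` of the ball satisfy `logG G u u v ≤ η * logG G u u v` in the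
same way.
-/

open Real Filter Topology Finset Function

noncomputable def logG {Z : Type*} (G : Z → Z → Z → ℝ) (x y z : Z) : ℝ := log (G x y z)

def LogContractionOn {Z : Type*} (G : Z → Z → Z → ℝ) (F : Z → Z) (S : Set Z) (η : ℝ) :
    Prop :=
  ∀ x ∈ S, ∀ y ∈ S, ∀ z ∈ S,
    logG G (F x) (F y) (F z) ≤ η * max (logG G x y z) (max (logG G x (F x) (F x))
      (max (logG G y (F y) (F y)) (max (logG G x (F y) (F y))
        (min (logG G z (F x) (F x)) (logG G x z z)))))

namespace IsMultGMetric

variable {L : Type*} {G : L → L → L → ℝ}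

theorem one_le (hG : IsMultGMetric G) (x y z : L) : 1 ≤ G x y z := by
  have one_le_aab : ∀ a b, 1 ≤ G a a b := fun a b => by
    rcases eq_or_ne a b with h | h
    · exact (hG.eq_one a a b rfl h).ge
    · exact (hG.one_lt a b h).le
  rcases eq_or_ne y z with rfl | h
  · rw [hG.perm]
    exact one_le_aab y x
  · exact (one_le_aab x y).trans (hG.le_of_ne x y z h)

theorem exp_logG (hG : IsMultGMetric G) (x y z : L) : exp (logG G x y z) = G x y z :=
  exp_log (hG.pos x y z)

theorem logG_nonneg (hG : IsMultGMetric G) (x y z : L) : 0 ≤ logG G x y z :=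
  log_nonneg (hG.one_le x y z)

theorem logG_self (hG : IsMultGMetric G) (x : L) : logG G x x x = 0 := by
  rw [logG, hG.eq_one x x x rfl rfl, log_one]

theorem logG_eq_zero_iff (hG : IsMultGMetric G) {x y : L} : logG G x x y = 0 ↔ x = y := by
  refine ⟨fun h => by_contra fun hxy => ?_, fun h => h ▸ hG.logG_self x⟩
  exact (log_pos (hG.one_lt x y hxy)).ne' h

theorem logG_perm (hG : IsMultGMetric G) (x y z : L) : logG G x y z = logG G y z x := by
  rw [logG, hG.perm, logG]

theorem logG_swap (hG : IsMultGMetric G) (x y z : L) : logG G x y z = logG G x z y := by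
  rw [logG, hG.swap, logG]

theorem logG_rect (hG : IsMultGMetric G) (x y z t : L) :
    logG G x y z ≤ logG G x t t + logG G t y z := by
  rw [logG, logG, logG, ← log_mul (hG.pos x t t).ne' (hG.pos t y z).ne']
  exact log_le_log (hG.pos x y z) (hG.rect x y z t)

theorem logG_abb_le (hG : IsMultGMetric G) (a b : L) : logG G a b b ≤ 2 * logG G b a a := by
  have h := hG.logG_rect b b a a
  rw [← hG.logG_perm a b b, hG.logG_perm a b a] at h
  linarith

theorem logG_aab_le (hG : IsMultGMetric G) (a b : L) : logG G a a b ≤ 2 * logG G a b b := by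
  have h := hG.logG_rect a a b b
  rw [hG.logG_perm b a b] at h
  linarith

theorem logG_le_of_center (hG : IsMultGMetric G) (a b c t : L) :
    logG G a b c ≤ 2 * (logG G t a a + logG G t b b + logG G t c c) := by
  have h₁ := hG.logG_rect a b c t
  have h₂ := hG.logG_rect b c t t
  rw [← hG.logG_perm t b c, hG.logG_swap t c t] at h₂
  linarith [hG.logG_abb_le a t, hG.logG_abb_le b t, hG.logG_aab_le t c]

theorem logG_le_sum (hG : IsMultGMetric G) (x : ℕ → L) (N k : ℕ) :
    logG G (x N) (x (N + k)) (x (N + k)) ≤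
      ∑ i ∈ range k, logG G (x (N + i)) (x (N + i + 1)) (x (N + i + 1)) := by
  induction k with
  | zero => simp [hG.logG_self]
  | succ k ih =>
    rw [sum_range_succ, ← add_assoc]
    linarith [hG.logG_rect (x N) (x (N + k + 1)) (x (N + k + 1)) (x (N + k))]

theorem logG_le_of_geometric (hG : IsMultGMetric G) (x : ℕ → L) {c μ : ℝ} (hc : 0 ≤ c)
    (hμ0 : 0 ≤ μ) (hμ1 : μ < 1) (N k : ℕ)
    (h : ∀ i < k, logG G (x (N + i)) (x (N + i + 1)) (x (N + i + 1)) ≤ c * μ ^ i) :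
    logG G (x N) (x (N + k)) (x (N + k)) ≤ c / (1 - μ) :=
  calc logG G (x N) (x (N + k)) (x (N + k))
      ≤ ∑ i ∈ range k, c * μ ^ i :=
        (hG.logG_le_sum x N k).trans (sum_le_sum fun i hi => h i (mem_range.mp hi))
    _ ≤ c / (1 - μ) := by
        rw [← mul_sum, div_eq_mul_inv]
        gcongr
        simpa using geom_sum_Ico_le_of_lt_one hμ0 hμ1 (m := 0) (n := k)

theorem gmCauchy_of_logG_le (hG : IsMultGMetric G) (x : ℕ → L) {t : ℕ → ℝ}
    (ht : Tendsto t atTop (𝓝 0))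
    (h : ∀ N n, N ≤ n → logG G (x N) (x n) (x n) ≤ t N) : GMCauchy G x := by
  intro ε hε
  have hε6 : 0 < log ε / 6 := div_pos (log_pos hε) (by norm_num)
  obtain ⟨N, hN⟩ := (ht.eventually (gt_mem_nhds hε6)).exists_forall_of_atTop
  refine ⟨N, fun n hn m hm l hl => ?_⟩
  rw [← hG.exp_logG, ← exp_log (one_pos.trans hε), exp_lt_exp]
  linarith [hG.logG_le_of_center (x n) (x m) (x l) (x N), h N n hn, h N m hm, h N l hl, hN N le_rfl]

theorem tendsto_logG_of_gmConv (hG : IsMultGMetric G) {x : ℕ → L} {p : L}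
    (hx : GMConv G x p) : Tendsto (fun n => logG G (x n) p p) atTop (𝓝 0) := by
  have hxxp : Tendsto (fun n => logG G (x n) (x n) p) atTop (𝓝 0) := by
    refine Metric.tendsto_atTop.mpr fun ε hε => ?_
    obtain ⟨N, hN⟩ := hx (exp ε) (one_lt_exp_iff.mpr hε)
    refine ⟨N, fun n hn => ?_⟩
    rw [Real.dist_eq, sub_zero, abs_of_nonneg (hG.logG_nonneg _ _ _), ← exp_lt_exp, hG.exp_logG]
    exact hN n hn n hn
  refine squeeze_zero (fun n => hG.logG_nonneg _ _ _) (fun n => ?_)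
    (by simpa using hxxp.const_mul 2)
  rw [← hG.logG_perm p (x n) (x n)]
  exact hG.logG_abb_le (x n) p

theorem logG_le_of_tendsto (hG : IsMultGMetric G) {x : ℕ → L} {a p : L} {r : ℝ}
    (hx : ∀ n, logG G a (x n) (x n) ≤ r)
    (hp : Tendsto (fun n => logG G (x n) p p) atTop (𝓝 0)) :
    logG G a p p ≤ r :=
  ge_of_tendsto' (by simpa using hp.const_add r) fun n =>
    (hG.logG_rect a p p (x n)).trans (by linarith [hx n])

theorem logContractionOn_of_rpow (hG : IsMultGMetric G) {F : L → L} {S : Set L} {η : ℝ}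
    {m : ℕ} (hm : 0 < m)
    (h : ∀ x ∈ S, ∀ y ∈ S, ∀ z ∈ S,
      (G (F x) (F y) (F z)) ^ (1 / (m : ℝ)) ≤
        (max ((G x y z) ^ (1 / (m : ℝ)))
          (max ((G x (F x) (F x)) ^ (1 / (m : ℝ)))
            (max ((G y (F y) (F y)) ^ (1 / (m : ℝ)))
              (max ((G x (F y) (F y)) ^ (1 / (m : ℝ)))
                ((min (G z (F x) (F x)) (G x z z)) ^ (1 / (m : ℝ))))))) ^ η) :
    LogContractionOn G F S η := by
  intro x hx y hy z hz
  have hc : (0 : ℝ) < 1 / m := by positivity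
  have h := h x hx y hy z hz
  -- writing `G = exp ∘ logG`, the powers, `max` and `min` all pass through `exp`
  simp only [← hG.exp_logG, ← exp_mul, ← exp_monotone.map_max, ← exp_monotone.map_min,
    ← max_mul_of_nonneg _ _ hc.le, exp_le_exp] at h
  nlinarith

end IsMultGMetric

theorem div_one_sub_mem_Ico {η : ℝ} (hη0 : 0 ≤ η) (hη : η < 1 / 2) :
    η / (1 - η) ∈ Set.Ico 0 1 :=
  ⟨div_nonneg hη0 (by linarith), (div_lt_one (by linarith)).mpr (by linarith)⟩

namespace LogContractionOn

variable {L : Type*} {G : L → L → L → ℝ} {F : L → L} {S : Set L} {x₀ : L} {η r : ℝ}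

theorem logG_map_le (hF : LogContractionOn G F S η) (hG : IsMultGMetric G) (hη0 : 0 ≤ η)
    (hη1 : η < 1) {x : L} (hx : x ∈ S) (hFx : F x ∈ S) :
    logG G (F x) (F (F x)) (F (F x)) ≤ η / (1 - η) * logG G x (F x) (F x) := by
  set a := logG G x (F x) (F x)
  set b := logG G (F x) (F (F x)) (F (F x))
  have ha := hG.logG_nonneg x (F x) (F x)
  have hb := hG.logG_nonneg (F x) (F (F x)) (F (F x))
  have hmax : max a (max a (max b (max (logG G x (F (F x)) (F (F x)))
      (min (logG G (F x) (F x) (F x)) (logG G x (F x) (F x)))))) ≤ a + b := by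
    refine max_le (by linarith) (max_le (by linarith) (max_le (by linarith) (max_le
      (hG.logG_rect x _ _ (F x)) ?_)))
    rw [hG.logG_self]
    exact (min_le_left _ _).trans (by linarith)
  have hba : b * (1 - η) ≤ η * a := by
    linarith [hF x hx (F x) hFx (F x) hFx, mul_le_mul_of_nonneg_left hmax hη0]
  rw [div_mul_eq_mul_div, le_div_iff₀ (by linarith)]
  exact hba

theorem isFixedPt_of_tendsto (hF : LogContractionOn G F S η) (hG : IsMultGMetric G)
    (hη0 : 0 ≤ η) (hη1 : η < 1) {x : ℕ → L} {p : L} (hxS : ∀ n, x n ∈ S) (hpS : p ∈ S)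
    (hxF : ∀ n, x (n + 1) = F (x n))
    (hδ : Tendsto (fun n => logG G (x n) (x (n + 1)) (x (n + 1))) atTop (𝓝 0))
    (hp : Tendsto (fun n => logG G (x n) p p) atTop (𝓝 0)) : IsFixedPt F p := by
  set a := logG G p (F p) (F p)
  set e := fun n => logG G (x n) p p
  set δ := fun n => logG G (x n) (x (n + 1)) (x (n + 1))
  have hbound : ∀ n, a ≤ 2 * e (n + 1) + η * (e n + δ n + a) := by
    intro n
    have he := hG.logG_nonneg (x n) p p
    have hd := hG.logG_nonneg (x n) (x (n + 1)) (x (n + 1))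
    have ha := hG.logG_nonneg p (F p) (F p)
    have hmax : max (e n) (max (δ n) (max a (max (logG G (x n) (F p) (F p))
        (min (logG G p (x (n + 1)) (x (n + 1))) (e n))))) ≤ e n + δ n + a := by
      refine max_le (by linarith) (max_le (by linarith) (max_le (by linarith) (max_le
        ((hG.logG_rect (x n) _ _ p).trans (by linarith))
        ((min_le_right _ _).trans (by linarith)))))
    have hstep := hF (x n) (hxS n) p hpS p hpS
    rw [← hxF n] at hstep
    calc a ≤ logG G p (x (n + 1)) (x (n + 1)) + logG G (x (n + 1)) (F p) (F p) :=
          hG.logG_rect _ _ _ _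
      _ ≤ 2 * e (n + 1) + η * (e n + δ n + a) := by
          gcongr
          · exact hG.logG_abb_le _ _
          · exact hstep.trans (mul_le_mul_of_nonneg_left hmax hη0)
  have hlim : Tendsto (fun n => 2 * e (n + 1) + η * (e n + δ n + a)) atTop (𝓝 (η * a)) := by
    simpa using ((hp.comp (tendsto_add_atTop_nat 1)).const_mul 2).add
      (((hp.add hδ).add_const a).const_mul η)
  have ha0 : a = 0 := le_antisymm
    (by nlinarith [ge_of_tendsto' hlim hbound, hG.logG_nonneg p (F p) (F p)])
    (hG.logG_nonneg _ _ _)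
  have hFp : logG G (F p) (F p) p = 0 := by rwa [← hG.logG_perm p]
  exact hG.logG_eq_zero_iff.mp hFp

theorem eq_of_isFixedPt (hF : LogContractionOn G F S η) (hG : IsMultGMetric G) (hη1 : η < 1)
    {u v : L} (hu : u ∈ S) (hv : v ∈ S) (hFu : IsFixedPt F u) (hFv : IsFixedPt F v) :
    u = v := by
  have h := hF u hu u hu v hv
  rw [hFu, hFv, hG.logG_self, hG.logG_perm v u u] at h
  have hmax : max (logG G u u v) (max 0 (max 0 (max 0 (min (logG G u u v) (logG G u v v)))))
      = logG G u u v := by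
    have ha := hG.logG_nonneg u u v
    exact le_antisymm (max_le le_rfl (max_le ha (max_le ha (max_le ha (min_le_left _ _)))))
      (le_max_left _ _)
  rw [hmax] at h
  refine hG.logG_eq_zero_iff.mp (le_antisymm ?_ (hG.logG_nonneg u u v))
  nlinarith

theorem logG_iterate_le (hF : LogContractionOn G F {ρ | logG G x₀ ρ ρ ≤ r} η)
    (hG : IsMultGMetric G) (hη0 : 0 ≤ η) (hη : η < 1 / 2)
    (hstart : logG G x₀ (F x₀) (F x₀) ≤ (1 - η / (1 - η)) * r) (n : ℕ) :
    logG G (F^[n] x₀) (F^[n + 1] x₀) (F^[n + 1] x₀) ≤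
      logG G x₀ (F x₀) (F x₀) * (η / (1 - η)) ^ n := by
  set μ := η / (1 - η)
  set δ₀ := logG G x₀ (F x₀) (F x₀)
  obtain ⟨hμ0, hμ1⟩ := div_one_sub_mem_Ico hη0 hη
  have mem : ∀ k, (∀ i < k, logG G (F^[i] x₀) (F^[i + 1] x₀) (F^[i + 1] x₀) ≤ δ₀ * μ ^ i) →
      F^[k] x₀ ∈ {ρ | logG G x₀ ρ ρ ≤ r} := fun k h => by
    have := hG.logG_le_of_geometric (fun i => F^[i] x₀) (hG.logG_nonneg _ _ _) hμ0 hμ1 0 k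
      (by simpa using h)
    simp only [zero_add, iterate_zero, id] at this
    exact this.trans ((div_le_iff₀ (by linarith)).mpr (by linarith))
  induction n using Nat.strong_induction_on with
  | _ n ih =>
    cases n with
    | zero => simp [δ₀]
    | succ n =>
      have hn := mem n fun i hi => ih i (by omega)
      have hn1 := mem (n + 1) ih
      rw [iterate_succ_apply'] at hn1
      calc logG G (F^[n + 1] x₀) (F^[n + 1 + 1] x₀) (F^[n + 1 + 1] x₀)
          ≤ μ * logG G (F^[n] x₀) (F^[n + 1] x₀) (F^[n + 1] x₀) := by
            simpa only [iterate_succ_apply'] using hF.logG_map_le hG hη0 (by linarith) hn hn1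
        _ ≤ μ * (δ₀ * μ ^ n) := by gcongr; exact ih n n.lt_succ_self
        _ = δ₀ * μ ^ (n + 1) := by ring

theorem exists_isFixedPt (hF : LogContractionOn G F {ρ | logG G x₀ ρ ρ ≤ r} η)
    (hG : IsMultGMetric G) (hcomp : GMComplete G) (hη0 : 0 ≤ η) (hη : η < 1 / 2)
    (hstart : logG G x₀ (F x₀) (F x₀) ≤ (1 - η / (1 - η)) * r) :
    ∃ p, logG G x₀ p p ≤ r ∧ IsFixedPt F p := by
  set μ := η / (1 - η)
  set δ₀ := logG G x₀ (F x₀) (F x₀)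
  obtain ⟨hμ0, hμ1⟩ := div_one_sub_mem_Ico hη0 hη
  have hδ₀ : 0 ≤ δ₀ := hG.logG_nonneg _ _ _
  have hδ := hF.logG_iterate_le hG hη0 hη hstart
  have tail : ∀ N n, N ≤ n →
      logG G (F^[N] x₀) (F^[n] x₀) (F^[n] x₀) ≤ δ₀ * μ ^ N / (1 - μ) := by
    intro N n hNn
    obtain ⟨k, rfl⟩ := Nat.exists_eq_add_of_le hNn
    refine hG.logG_le_of_geometric (fun i => F^[i] x₀) (by positivity) hμ0 hμ1 N k
      fun i _ => ?_
    rw [mul_assoc, ← pow_add]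
    exact hδ (N + i)
  have mem : ∀ n, logG G x₀ (F^[n] x₀) (F^[n] x₀) ≤ r := fun n =>
    (tail 0 n n.zero_le).trans ((div_le_iff₀ (by linarith)).mpr (by linarith))
  have hgeom : Tendsto (fun n => δ₀ * μ ^ n) atTop (𝓝 0) := by
    simpa using (tendsto_pow_atTop_nhds_zero_of_lt_one hμ0 hμ1).const_mul δ₀
  obtain ⟨p, hp⟩ :=
    hcomp _ (hG.gmCauchy_of_logG_le _ (by simpa using hgeom.div_const (1 - μ)) tail)
  have hpx := hG.tendsto_logG_of_gmConv hp
  have hpS := hG.logG_le_of_tendsto mem hpx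
  refine ⟨p, hpS, hF.isFixedPt_of_tendsto hG hη0 (by linarith) mem hpS
    (fun n => iterate_succ_apply' F n x₀) ?_ hpx⟩
  exact squeeze_zero (fun n => hG.logG_nonneg _ _ _) hδ hgeom

end LogContractionOn

theorem theorem_3_6_general {L : Type*} [PartialOrder L]
    (G : L → L → L → ℝ) (hG : IsMultGMetric G) (hcomp : GMComplete G)
    (F : L → L) (x₀ : L) (η γ μ : ℝ) (m : ℕ)
    (hη0 : 0 ≤ η) (hη1 : η < 1 / 2) (hμ : μ = η / (1 - η)) (hγ : 0 < γ) (hm : 0 < m)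
    (hcontr : ∀ x ∈ GMBall G x₀ γ, ∀ y ∈ GMBall G x₀ γ, ∀ z ∈ GMBall G x₀ γ,
      (G (F x) (F y) (F z)) ^ (1 / (m : ℝ)) ≤
        (max ((G x y z) ^ (1 / (m : ℝ)))
          (max ((G x (F x) (F x)) ^ (1 / (m : ℝ)))
            (max ((G y (F y) (F y)) ^ (1 / (m : ℝ)))
              (max ((G x (F y) (F y)) ^ (1 / (m : ℝ)))
                ((min (G z (F x) (F x)) (G x z z)) ^ (1 / (m : ℝ))))))) ^ η)
    (hstart : G x₀ (F x₀) (F x₀) ≤ γ ^ (1 - μ)) :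
    ∃ xs ∈ GMBall G x₀ γ, F xs = xs ∧ G xs xs xs = 1 ∧
      ∀ u ∈ GMBall G x₀ γ, ∀ v ∈ GMBall G x₀ γ,
        F u = u → F v = v → (u ≤ v ∨ v ≤ u) → u = v := by
  subst hμ
  have hF := hG.logContractionOn_of_rpow hm hcontr
  have hball : GMBall G x₀ γ = {ρ | logG G x₀ ρ ρ ≤ log γ} :=
    Set.ext fun ρ => (log_le_log_iff (hG.pos _ _ _) hγ).symm
  have hstart' : logG G x₀ (F x₀) (F x₀) ≤ (1 - η / (1 - η)) * log γ := by
    rw [← log_rpow hγ]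
    exact log_le_log (hG.pos _ _ _) hstart
  rw [hball] at hF ⊢
  obtain ⟨p, hpS, hFp⟩ := hF.exists_isFixedPt hG hcomp hη0 hη1 hstart'
  exact ⟨p, hpS, hFp, hG.eq_one p p p rfl rfl, fun u hu v hv hFu hFv _ =>
    hF.eq_of_isFixedPt hG (by linarith) hu hv hFu hFv⟩

theorem theorem_3_6 {L : Type*} [Nonempty L] [PartialOrder L]
    (G : L → L → L → ℝ) (hG : IsMultGMetric G) (hcomp : GMComplete G)
    (F : L → L) (x₀ : L) (η γ μ : ℝ) (m : ℕ)
    (hη0 : 0 ≤ η) (hη1 : η < 1 / 2) (hμ : μ = η / (1 - η)) (hγ : 0 < γ) (hm : 0 < m)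
    (hdec : ∀ x : L, F x ≤ x)
    (hcontr : ∀ x ∈ GMBall G x₀ γ, ∀ y ∈ GMBall G x₀ γ, ∀ z ∈ GMBall G x₀ γ,
      (G (F x) (F y) (F z)) ^ (1 / (m : ℝ)) ≤
        (max ((G x y z) ^ (1 / (m : ℝ)))
          (max ((G x (F x) (F x)) ^ (1 / (m : ℝ)))
            (max ((G y (F y) (F y)) ^ (1 / (m : ℝ)))
              (max ((G x (F y) (F y)) ^ (1 / (m : ℝ)))
                ((min (G z (F x) (F x)) (G x z z)) ^ (1 / (m : ℝ))))))) ^ η)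
    (hstart : G x₀ (F x₀) (F x₀) ≤ γ ^ (1 - μ))
    (hmono : ∀ (x : ℕ → L) (v : L), (∀ n, x n ∈ GMBall G x₀ γ) →
      (∀ n, x (n + 1) ≤ x n) → GMConv G x v → ∀ n, v ≤ x n) :
    ∃ xs ∈ GMBall G x₀ γ, F xs = xs ∧ G xs xs xs = 1 ∧
      ∀ u ∈ GMBall G x₀ γ, ∀ v ∈ GMBall G x₀ γ,
        F u = u → F v = v → (u ≤ v ∨ v ≤ u) → u = v :=
  theorem_3_6_general G hG hcomp F x₀ η γ μ m hη0 hη1 hμ hγ hm hcontr hstart
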